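/- Let X be a finite discrete space with at least two elements, Γ a nonempty set, and φ : Γ → Γ one-to-one without any periodic point. Then (X^Γ, σ_φ) has the uniform stroboscopical property. -/
import Mathlib


open Filter

/-- The generalized shift `σ_φ` on `X^Γ`. -/
def genShift {X Γ : Type*} (φ : Γ → Γ) (x : Γ → X) : Γ → X := fun γ => x (φ γ)

/-- The basic entourage `α_H` of agreement on `H ⊆ Γ`. -/
def agreeEnt (X : Type*) {Γ : Type*} (H : Set Γ) : Set ((Γ → X) × (Γ → X)) :=
  {p | ∀ γ ∈ H, p.1 γ = p.2 γ}

/-- Membership in the unique compatible uniform structure `𝒰` on `X^Γ`: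
`D` contains some `α_H` with `H ⊆ Γ` finite. -/
def IsProdEntourage (X : Type*) {Γ : Type*} (D : Set ((Γ → X) × (Γ → X))) : Prop :=
  ∃ H : Set Γ, H.Finite ∧ agreeEnt X H ⊆ D

/-- `ω_f(A, x)`: limits of convergent subsequences of `(f^[A i] x)_i`. -/
def omegaLimitSet {Z : Type*} [TopologicalSpace Z] (f : Z → Z) (A : ℕ → ℕ) (x : Z) : Set Z :=
  {y | ∃ k : ℕ → ℕ, StrictMono k ∧ Tendsto (fun i => f^[A (k i)] x) atTop (nhds y)}

/-- The stroboscopical property of a dynamical system `(Z, f)`. -/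
def Strob {Z : Type*} [TopologicalSpace Z] (f : Z → Z) : Prop :=
  ∀ z : Z, ∀ A : ℕ → ℕ, StrictMono A → ∃ x : Z, z ∈ omegaLimitSet f A x

/-- The uniform stroboscopical property of `(X^Γ, σ_φ)`: every strictly increasing
sequence `A` has a subsequence `(A (k i))` for which there is `ϱ` with
`σ_φ^[A (k i)] ∘ ϱ → id` uniformly. -/
def UnifStrobShift {X Γ : Type*} (φ : Γ → Γ) : Prop :=
  ∀ A : ℕ → ℕ, StrictMono A → ∃ k : ℕ → ℕ, StrictMono k ∧
    ∃ ρ : (Γ → X) → (Γ → X),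
      ∀ D : Set ((Γ → X) × (Γ → X)), IsProdEntourage X D →
        ∃ N : ℕ, ∀ i, N ≤ i → ∀ z : Γ → X, (z, (genShift φ)^[A (k i)] (ρ z)) ∈ D

section StrobAux

variable {Γ : Type*}

private lemma iterEqIter {φ : Γ → Γ} (hnp : ∀ γ : Γ, ∀ m : ℕ, 1 ≤ m → φ^[m] γ ≠ γ)
    {x : Γ} {p q : ℕ} (hpq : φ^[p] x = φ^[q] x) : p = q := by
  by_contra hne
  rcases Nat.lt_or_ge p q with hlt | hge
  · exact hnp (φ^[p] x) (q - p) (by omega) (by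
      rw [← Function.iterate_add_apply, show q - p + p = q by omega]; exact hpq.symm)
  · have hlt : q < p := by omega
    exact hnp (φ^[q] x) (p - q) (by omega) (by
      rw [← Function.iterate_add_apply, show p - q + q = p by omega]; exact hpq)

private lemma hdiff {φ : Γ → Γ} (hnp : ∀ γ : Γ, ∀ m : ℕ, 1 ≤ m → φ^[m] γ ≠ γ)
    {γ γ' : Γ} {a b a' b' : ℕ}
    (h1 : φ^[a] γ = φ^[b] γ') (h2 : φ^[a'] γ = φ^[b'] γ') :
    (b : ℤ) - a = (b' : ℤ) - a' := by
  have e1 : φ^[a' + b] γ' = φ^[a + b'] γ' := by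
    have t1 : φ^[a' + a] γ = φ^[a' + b] γ' := by
      rw [Function.iterate_add_apply, h1, ← Function.iterate_add_apply]
    have t2 : φ^[a + a'] γ = φ^[a + b'] γ' := by
      rw [Function.iterate_add_apply, h2, ← Function.iterate_add_apply]
    rw [← t1, Nat.add_comm a' a, t2]
  have := iterEqIter hnp e1
  omega

def strobRel (φ : Γ → Γ) (γ γ' : Γ) : Prop := ∃ a b : ℕ, φ^[a] γ = φ^[b] γ'

def strobSetoid (φ : Γ → Γ) : Setoid Γ where
  r := strobRel φ
  iseqv := by
    constructor
    · intro γ; exact ⟨0, 0, rfl⟩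
    · rintro γ γ' ⟨a, b, hab⟩; exact ⟨b, a, hab.symm⟩
    · rintro γ γ' γ'' ⟨a, b, h1⟩ ⟨c, d, h2⟩
      refine ⟨c + a, b + d, ?_⟩
      rw [Function.iterate_add_apply, h1, ← Function.iterate_add_apply, Nat.add_comm c b,
        Function.iterate_add_apply, h2, ← Function.iterate_add_apply]

noncomputable def strobRep (φ : Γ → Γ) (γ : Γ) : Γ :=
  (Quotient.mk (strobSetoid φ) γ).out

lemma strobRep_rel (φ : Γ → Γ) (γ : Γ) : strobRel φ γ (strobRep φ γ) := by
  have : Quotient.mk (strobSetoid φ) ((Quotient.mk (strobSetoid φ) γ).out)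
      = Quotient.mk (strobSetoid φ) γ := Quotient.out_eq _
  exact (strobSetoid φ).symm (Quotient.exact this)

lemma strobRep_eq {φ : Γ → Γ} {γ γ' : Γ} (hr : strobRel φ γ γ') :
    strobRep φ γ = strobRep φ γ' := by
  unfold strobRep
  rw [Quotient.sound (s := strobSetoid φ) hr]

noncomputable def hgt (φ : Γ → Γ) (γ : Γ) : ℤ :=
  ((strobRep_rel φ γ).choose_spec.choose : ℤ) - (strobRep_rel φ γ).choose

lemma hgt_spec (φ : Γ → Γ) (γ : Γ) :
    ∃ a b : ℕ, φ^[a] γ = φ^[b] (strobRep φ γ) ∧ hgt φ γ = (b : ℤ) - a :=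
  ⟨(strobRep_rel φ γ).choose, (strobRep_rel φ γ).choose_spec.choose,
    (strobRep_rel φ γ).choose_spec.choose_spec, rfl⟩

lemma hgt_shift {φ : Γ → Γ} (hnp : ∀ γ : Γ, ∀ m : ℕ, 1 ≤ m → φ^[m] γ ≠ γ)
    (n : ℕ) (γ : Γ) : hgt φ (φ^[n] γ) = hgt φ γ + n := by
  obtain ⟨a, b, s1, e1⟩ := hgt_spec φ (φ^[n] γ)
  obtain ⟨a', b', s2, e2⟩ := hgt_spec φ γ
  have hrep : strobRep φ (φ^[n] γ) = strobRep φ γ := strobRep_eq ⟨0, n, rfl⟩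
  rw [hrep] at s1
  have s1' : φ^[a + n] γ = φ^[b] (strobRep φ γ) := by
    rw [Function.iterate_add_apply, s1]
  have := hdiff hnp s1' s2
  omega

lemma genShift_iterate {X : Type*} (φ : Γ → Γ) (n : ℕ) (x : Γ → X) (γ : Γ) :
    (genShift φ)^[n] x γ = x (φ^[n] γ) := by
  induction n generalizing x γ with
  | zero => rfl
  | succ n ih =>
    rw [Function.iterate_succ_apply, ih, Function.iterate_succ_apply']
    rfl

def kseq (A : ℕ → ℕ) : ℕ → ℕ
  | 0 => 0
  | (i + 1) => max (kseq A i + 1) (A (kseq A i) + 2 * i + 4)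

lemma kseq_strictMono (A : ℕ → ℕ) : StrictMono (kseq A) :=
  strictMono_nat_of_lt_succ fun i => lt_of_lt_of_le (Nat.lt_succ_self _) (le_max_left _ _)

lemma kseq_gap {A : ℕ → ℕ} (hA : StrictMono A) (i : ℕ) :
    A (kseq A i) + 2 * i + 4 ≤ A (kseq A (i + 1)) := by
  have h1 : A (kseq A i) + 2 * i + 4 ≤ kseq A (i + 1) := le_max_right _ _
  exact le_trans h1 hA.le_apply

end StrobAux

/-- if `φ` is one-to-one without any periodic point, then
`(X^Γ, σ_φ)` has the uniform stroboscopical property. -/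
theorem stmt_10 {X Γ : Type*} [Fintype X] [Nontrivial X] [Nonempty Γ] (φ : Γ → Γ)
    (hinj : Function.Injective φ)
    (h : ¬ ∃ lam : Γ, ∃ m : ℕ, 1 ≤ m ∧ φ^[m] lam = lam) :
    UnifStrobShift (X := X) φ := by
  classical
  push_neg at h
  intro A hA
  set k := kseq A with hkdef
  have hk : StrictMono k := kseq_strictMono A
  have hgap : ∀ i, A (k i) + 2 * i + 4 ≤ A (k (i + 1)) := kseq_gap hA
  set B : ℕ → ℕ := fun i => A (k i) with hBdef
  set c : ℕ → ℤ := fun i => (B i : ℤ) - i with hcdef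
  have hc1 : ∀ i, c i + 1 ≤ c (i + 1) := by
    intro i
    have := hgap i
    simp only [hcdef, hBdef]
    push_cast
    omega
  have hcmono : ∀ i j, i ≤ j → c i ≤ c j := by
    intro i j hij
    induction j with
    | zero => have : i = 0 := Nat.le_zero.mp hij; rw [this]
    | succ j ih =>
      rcases Nat.lt_or_ge i (j + 1) with hlt | hge
      · exact le_trans (ih (by omega)) (by have := hc1 j; omega)
      · have : i = j + 1 := by omega
        rw [this]
  have hclin : ∀ i : ℕ, c 0 + i ≤ c i := by
    intro i
    induction i with
    | zero => simp
    | succ i ih => have := hc1 i; push_cast; push_cast at ih; omega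
  have hex : ∀ t : ℤ, ∃ i : ℕ, t < c i := by
    intro t
    refine ⟨(t - c 0).toNat + 1, ?_⟩
    have h1 : t - c 0 ≤ ((t - c 0).toNat : ℤ) := Int.self_le_toNat _
    have h2 := hclin ((t - c 0).toNat + 1)
    push_cast at h2 ⊢
    omega
  set iIdx : Γ → ℕ := fun δ => Nat.find (hex (hgt φ δ)) - 1 with hiIdx
  set ρ : (Γ → X) → (Γ → X) := fun z δ =>
    if hδ : ∃ γ', φ^[B (iIdx δ)] γ' = δ then z hδ.choose else z δ with hρ
  refine ⟨k, hk, ρ, ?_⟩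
  have key : ∀ γ : Γ, ∀ i : ℕ, (hgt φ γ).natAbs ≤ i → ∀ z : Γ → X,
      ρ z (φ^[B i] γ) = z γ := by
    intro γ i hi z
    have hi' : ((hgt φ γ).natAbs : ℤ) ≤ i := by exact_mod_cast hi
    have habs1 : hgt φ γ ≤ (i : ℤ) := by omega
    have habs2 : -(i : ℤ) ≤ hgt φ γ := by omega
    have hδh : hgt φ (φ^[B i] γ) = hgt φ γ + B i := hgt_shift h (B i) γ
    have hfind : Nat.find (hex (hgt φ (φ^[B i] γ))) = i + 1 := by
      rw [Nat.find_eq_iff]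
      constructor
      · rw [hδh]
        have hg := hgap i
        have hci1 : c (i + 1) = (B (i + 1) : ℤ) - (i + 1) := rfl
        have hBi : (B i : ℤ) + 2 * i + 4 ≤ B (i + 1) := by exact_mod_cast hg
        omega
      · intro j hj
        simp only [not_lt]
        have hcj : c j ≤ c i := hcmono j i (by omega)
        have hci : c i = (B i : ℤ) - i := rfl
        rw [hδh]
        omega
    have hidx : iIdx (φ^[B i] γ) = i := by
      rw [hiIdx]
      simp only [hfind]
      omega
    have hex2 : ∃ γ', φ^[B i] γ' = φ^[B i] γ := ⟨γ, rfl⟩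
    rw [hρ]
    simp only [hidx]
    rw [dif_pos hex2]
    exact congrArg z (hinj.iterate (B i) hex2.choose_spec)
  intro D hD
  obtain ⟨H, hHfin, hHsub⟩ := hD
  refine ⟨hHfin.toFinset.sup (fun γ => (hgt φ γ).natAbs), fun i hi z => hHsub ?_⟩
  intro γ hγ
  have hγ' : γ ∈ hHfin.toFinset := hHfin.mem_toFinset.mpr hγ
  have hle : (hgt φ γ).natAbs ≤ i :=
    le_trans (Finset.le_sup (f := fun γ => (hgt φ γ).natAbs) hγ') hi
  show z γ = (genShift φ)^[A (k i)] (ρ z) γ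
  rw [genShift_iterate]
  exact (key γ i hle z).symm
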